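/- (Classical Spitzer identity) Let (A,P) be a complete filtered commutative Rota–Baxter algebra of weight 1. Then for any b ∈ A_1: exp(−P(log(1+b))) = Σ_{n≥0} (−1)^n P(P(···P(P(b)b)···b)b), the n-fold right-nested application; equivalently, x := exp(−P(log(1+b))) is the unique solution of x = 1 − P(xb). -/

import Mathlib

open scoped BigOperators

noncomputable def expS (K : Type*) {A : Type*} [Field K] [CharZero K] [Ring A] [Algebra K A]
    [UniformSpace A] (a : A) : A :=
  ∑' n : ℕ, ((n.factorial : K)⁻¹) • a ^ n

noncomputable def logS (K : Type*) {A : Type*} [Field K] [CharZero K] [Ring A] [Algebra K A]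
    [UniformSpace A] (a : A) : A :=
  ∑' n : ℕ, (((-1 : K) ^ n) * ((n : K) + 1)⁻¹) • (a - 1) ^ (n + 1)

noncomputable def BCHs (K : Type*) {A : Type*} [Field K] [CharZero K] [Ring A] [Algebra K A]
    [UniformSpace A] (x y : A) : A :=
  logS K (expS K x * expS K y) - x - y

/-- A complete decreasing multiplicative filtration defining the topology of `A`. -/
def IsCompleteFiltration (K : Type*) {A : Type*} [Field K] [CharZero K] [Ring A] [Algebra K A]
    [UniformSpace A] (F : ℕ → Submodule K A) : Prop :=
  F 0 = ⊤ ∧ (∀ n, F (n + 1) ≤ F n) ∧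
    (∀ m n : ℕ, ∀ x ∈ F m, ∀ y ∈ F n, x * y ∈ F (m + n)) ∧
    (∀ n, IsOpen ((F n : Set A))) ∧
    (∀ U ∈ nhds (0 : A), ∃ n, ((F n : Set A)) ⊆ U)

variable {K : Type*} [Field K] [CharZero K] {A : Type*} [CommRing A] [Algebra K A]
  [UniformSpace A] [CompleteSpace A] [T2Space A] [IsTopologicalRing A]
  [IsUniformAddGroup A]

def spitzerTerm (P : A → A) (b : A) : ℕ → A
  | 0 => 1
  | n + 1 => P (spitzerTerm P b n * b)

/-!
Work in `A⟦t⟧` with `b` replaced by `t b`, and let `P̂` apply `P` coefficientwise; it is again a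
Rota–Baxter operator of weight one. For `L = log (1 + t b)` and `E = exp (-P̂ L)` we have
`E' = -P̂ (L') E` and `L' (1 + t b) = b`, and together with the Rota–Baxter identity these show that
`D = E - 1 + P̂ (E t b)` solves `D' = P̂ (L' D) - P̂ (L') D` with `D(0) = 0`, hence `D = 0`.
Comparing coefficients in `E = 1 - P̂ (E t b)` identifies the `n`-th coefficient of `E` with `(-1)ⁿ`
times the `n`-fold nested term. As `b ∈ A₁`, the `n`-th coefficient of every series involved lies in
`A_n`, so summing the coefficients (setting `t = 1`) converges, is multiplicative, commutes with `P`
and sends `E` to `exp (-P (log (1 + b)))`. Finally, `x ↦ 1 - P (x b)` maps the difference of two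
fixed points into every `A_n`, which gives uniqueness.
-/

open PowerSeries

/-- Rota–Baxter operators of weight one, in the convention `P x P y + θ P (x y) = P (x P y + P x y)`
with `θ = 1`. -/
def IsWeightOneRotaBaxter {S R : Type*} [Semiring S] [Semiring R] [Module S R]
    (P : R →ₗ[S] R) : Prop :=
  ∀ x y : R, P x * P y + P (x * y) = P (x * P y) + P (P x * y)

namespace IsCompleteFiltration

variable {𝕜 R : Type*} [Field 𝕜] [CharZero 𝕜] [Ring R] [Algebra 𝕜 R] [UniformSpace R]
  {F : ℕ → Submodule 𝕜 R}

theorem mem_zero (hF : IsCompleteFiltration 𝕜 F) (x : R) : x ∈ F 0 :=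
  hF.1 ▸ Submodule.mem_top

theorem antitone (hF : IsCompleteFiltration 𝕜 F) : Antitone F :=
  antitone_nat_of_succ_le hF.2.1

theorem mul_mem (hF : IsCompleteFiltration 𝕜 F) {m n : ℕ} {x y : R} (hx : x ∈ F m)
    (hy : y ∈ F n) : x * y ∈ F (m + n) :=
  hF.2.2.1 m n x hx y hy

theorem isOpen (hF : IsCompleteFiltration 𝕜 F) (n : ℕ) : IsOpen (F n : Set R) :=
  hF.2.2.2.1 n

theorem exists_subset_of_mem_nhds (hF : IsCompleteFiltration 𝕜 F) {U : Set R}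
    (hU : U ∈ nhds 0) : ∃ n, (F n : Set R) ⊆ U :=
  hF.2.2.2.2 U hU

theorem pow_mem (hF : IsCompleteFiltration 𝕜 F) {x : R} (hx : x ∈ F 1) (n : ℕ) : x ^ n ∈ F n := by
  induction n with
  | zero => exact hF.mem_zero _
  | succ n ih => rw [pow_succ]; exact hF.mul_mem ih hx

theorem eq_zero_of_forall_mem [T1Space R] (hF : IsCompleteFiltration 𝕜 F) {x : R}
    (hx : ∀ n, x ∈ F n) : x = 0 := by
  by_contra h
  obtain ⟨N, hN⟩ := hF.exists_subset_of_mem_nhds (isOpen_compl_singleton.mem_nhds (Ne.symm h))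
  exact hN (hx N) rfl

theorem continuous_of_map_mem [IsTopologicalAddGroup R] (hF : IsCompleteFiltration 𝕜 F)
    {P : R →ₗ[𝕜] R} (hP : ∀ n, ∀ x ∈ F n, P x ∈ F n) : Continuous P := by
  refine continuous_of_continuousAt_zero P ?_
  rw [ContinuousAt, map_zero, Filter.tendsto_def]
  intro U hU
  obtain ⟨N, hN⟩ := hF.exists_subset_of_mem_nhds hU
  exact Filter.mem_of_superset ((hF.isOpen N).mem_nhds (F N).zero_mem) fun x hx => hN (hP N x hx)

section Summable

variable [IsUniformAddGroup R] [CompleteSpace R]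

theorem summable_of_mem (hF : IsCompleteFiltration 𝕜 F) {ι : Type*} {u : ι → R} (deg : ι → ℕ)
    (hdeg : ∀ N, {i | deg i < N}.Finite) (hu : ∀ i, u i ∈ F (deg i)) : Summable u := by
  rw [summable_iff_vanishing]
  intro U hU
  obtain ⟨N, hN⟩ := hF.exists_subset_of_mem_nhds hU
  refine ⟨(hdeg N).toFinset, fun t ht => hN (Submodule.sum_mem _ fun i hi => ?_)⟩
  have hNi : N ≤ deg i :=
    not_lt.1 fun h => Finset.disjoint_left.1 ht hi ((hdeg N).mem_toFinset.2 h)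
  exact hF.antitone hNi (hu i)

theorem summable_of_mem_nat (hF : IsCompleteFiltration 𝕜 F) {u : ℕ → R} (hu : ∀ n, u n ∈ F n) :
    Summable u :=
  hF.summable_of_mem id Set.finite_lt_nat hu

theorem summable_of_mem_max (hF : IsCompleteFiltration 𝕜 F) {u : ℕ × ℕ → R}
    (hu : ∀ p : ℕ × ℕ, u p ∈ F (max p.1 p.2)) : Summable u :=
  hF.summable_of_mem (fun p => max p.1 p.2)
    (fun N => ((Set.finite_lt_nat N).prod (Set.finite_lt_nat N)).subset fun p hp => by
      simpa [max_lt_iff] using hp) hu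

end Summable

end IsCompleteFiltration

namespace PowerSeries

section Coeffwise

variable {S R : Type*} [Semiring S] [CommRing R] [Module S R]

noncomputable def coeffwise (P : R →ₗ[S] R) : R⟦X⟧ →ₗ[S] R⟦X⟧ where
  toFun f := mk fun n => P (coeff n f)
  map_add' f g := by ext; simp
  map_smul' c f := by ext; simp

@[simp]
theorem coeff_coeffwise (P : R →ₗ[S] R) (f : R⟦X⟧) (n : ℕ) :
    coeff n (coeffwise P f) = P (coeff n f) :=
  coeff_mk n fun n => P (coeff n f)

@[simp]
theorem constantCoeff_coeffwise (P : R →ₗ[S] R) (f : R⟦X⟧) :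
    constantCoeff (coeffwise P f) = P (constantCoeff f) := by
  rw [← coeff_zero_eq_constantCoeff_apply, coeff_coeffwise, coeff_zero_eq_constantCoeff_apply]

theorem X_pow_dvd_coeffwise (P : R →ₗ[S] R) {n : ℕ} {f : R⟦X⟧} (hf : X ^ n ∣ f) :
    X ^ n ∣ coeffwise P f := by
  rw [X_pow_dvd_iff] at hf ⊢
  intro m hm
  rw [coeff_coeffwise, hf m hm, map_zero]

theorem derivative_coeffwise (P : R →ₗ[S] R) (f : R⟦X⟧) :
    d⁄dX R (coeffwise P f) = coeffwise P (d⁄dX R f) := by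
  ext n
  simp only [coeff_derivative, coeff_coeffwise, ← Nat.cast_add_one, mul_comm _ ((n + 1 : ℕ) : R),
    ← nsmul_eq_mul, map_nsmul]

theorem isWeightOneRotaBaxter_coeffwise {P : R →ₗ[S] R} (hP : IsWeightOneRotaBaxter P) :
    IsWeightOneRotaBaxter (coeffwise P) := by
  intro f g
  ext n
  simp only [map_add, coeff_coeffwise, coeff_mul, map_sum, ← Finset.sum_add_distrib]
  exact Finset.sum_congr rfl fun _ _ => hP _ _

end Coeffwise

section Derivative

variable {R : Type*} [CommRing R] [IsAddTorsionFree R]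

theorem X_pow_succ_dvd_of_X_pow_dvd_derivative {n : ℕ} {f : R⟦X⟧} (h0 : constantCoeff f = 0)
    (hf : X ^ n ∣ d⁄dX R f) : X ^ (n + 1) ∣ f := by
  rw [X_pow_dvd_iff] at hf ⊢
  rintro (_ | m) hm
  · rwa [coeff_zero_eq_constantCoeff]
  · have h := hf m (by omega)
    rw [coeff_derivative, mul_comm, ← Nat.cast_add_one, ← nsmul_eq_mul] at h
    exact (nsmul_eq_zero_iff.1 h).resolve_right m.succ_ne_zero

theorem eq_zero_of_derivative_eq {Φ : R⟦X⟧ → R⟦X⟧} (hΦ : ∀ n f, X ^ n ∣ f → X ^ n ∣ Φ f)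
    {f : R⟦X⟧} (h0 : constantCoeff f = 0) (hf : d⁄dX R f = Φ f) : f = 0 := by
  have hdvd : ∀ n, X ^ n ∣ f := by
    intro n
    induction n with
    | zero => exact pow_zero (X : R⟦X⟧) ▸ one_dvd f
    | succ n ih => exact X_pow_succ_dvd_of_X_pow_dvd_derivative h0 (hf ▸ hΦ n f ih)
  ext m
  exact X_pow_dvd_iff.1 (hdvd (m + 1)) m m.lt_succ_self

end Derivative

variable {𝕜 R : Type*} [Field 𝕜] [CommRing R] [Algebra 𝕜 R]

section Log

variable (𝕜) in
noncomputable def logOneAddMulX (b : R) : R⟦X⟧ :=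
  X * mk fun n => ((-1 : 𝕜) ^ n * ((n : 𝕜) + 1)⁻¹) • b ^ (n + 1)

theorem coeff_succ_logOneAddMulX (b : R) (n : ℕ) :
    coeff (n + 1) (logOneAddMulX 𝕜 b) = ((-1 : 𝕜) ^ n * ((n : 𝕜) + 1)⁻¹) • b ^ (n + 1) := by
  rw [logOneAddMulX, coeff_succ_X_mul, coeff_mk]

theorem constantCoeff_logOneAddMulX (b : R) : constantCoeff (logOneAddMulX 𝕜 b) = 0 := by
  simp [logOneAddMulX]

theorem coeff_derivative_logOneAddMulX [CharZero 𝕜] (b : R) (n : ℕ) :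
    coeff n (d⁄dX R (logOneAddMulX 𝕜 b)) = (-b) ^ n * b := by
  have hn : ((n : 𝕜) + 1) ≠ 0 := n.cast_add_one_ne_zero
  rw [coeff_derivative, coeff_succ_logOneAddMulX,
    show ((n : R) + 1) = algebraMap 𝕜 R (n + 1) by simp, mul_comm, ← Algebra.smul_def, smul_smul,
    mul_left_comm, mul_inv_cancel₀ hn, mul_one, Algebra.smul_def, map_pow, map_neg, map_one,
    neg_pow b, pow_succ, mul_assoc]

theorem derivative_logOneAddMulX_mul [CharZero 𝕜] (b : R) :
    d⁄dX R (logOneAddMulX 𝕜 b) * (1 + X * C b) = C b := by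
  ext (_ | n)
  · simpa using coeff_derivative_logOneAddMulX (𝕜 := 𝕜) b 0
  · rw [mul_add, mul_one, map_add, mul_left_comm, coeff_succ_X_mul, coeff_mul_C,
      coeff_derivative_logOneAddMulX, coeff_derivative_logOneAddMulX, coeff_C,
      if_neg n.succ_ne_zero]
    ring

end Log

section Exp

theorem coeff_pow_of_lt {Y : R⟦X⟧} (hY : constantCoeff Y = 0) {m k : ℕ} (h : m < k) :
    coeff m (Y ^ k) = 0 :=
  X_pow_dvd_iff.1 (pow_dvd_pow_of_dvd (X_dvd_iff.2 hY) k) m h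

variable (𝕜) in
/-- `exp Y`, meaningful when `Y` has no constant term: then `Y ^ k` has no terms of degree
below `k`, so the terms of degree `m` only involve `k ≤ m`. -/
noncomputable def expOf (Y : R⟦X⟧) : R⟦X⟧ :=
  mk fun m => coeff m (∑ k ∈ Finset.range (m + 1), (k.factorial : 𝕜)⁻¹ • Y ^ k)

theorem constantCoeff_expOf (Y : R⟦X⟧) : constantCoeff (expOf 𝕜 Y) = 1 := by
  simp [expOf]

theorem X_pow_dvd_expOf_sub {Y : R⟦X⟧} (hY : constantCoeff Y = 0) (M : ℕ) :
    X ^ M ∣ expOf 𝕜 Y - ∑ k ∈ Finset.range M, (k.factorial : 𝕜)⁻¹ • Y ^ k := by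
  rw [X_pow_dvd_iff]
  intro m hm
  rw [map_sub, expOf, coeff_mk, sub_eq_zero, map_sum, map_sum]
  refine Finset.sum_subset (Finset.range_subset_range.2 hm) fun k _ hk => ?_
  rw [coeff_smul, coeff_pow_of_lt hY (by simpa using hk), smul_zero]

theorem derivative_sum_range_succ_smul_pow [CharZero 𝕜] (Y : R⟦X⟧) (M : ℕ) :
    d⁄dX R (∑ k ∈ Finset.range (M + 1), (k.factorial : 𝕜)⁻¹ • Y ^ k) =
      d⁄dX R Y * ∑ k ∈ Finset.range M, (k.factorial : 𝕜)⁻¹ • Y ^ k := by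
  rw [map_sum, Finset.sum_range_succ', Finset.mul_sum, pow_zero, Derivation.map_smul_of_tower,
    Derivation.map_one_eq_zero, smul_zero, add_zero]
  refine Finset.sum_congr rfl fun k _ => ?_
  rw [Derivation.map_smul_of_tower, derivative_pow, Nat.add_sub_cancel, mul_assoc,
    ← nsmul_eq_mul, ← Nat.cast_smul_eq_nsmul 𝕜, smul_smul, mul_smul_comm, mul_comm (Y ^ k)]
  congr 1
  have hk : ((k + 1 : ℕ) : 𝕜) ≠ 0 := Nat.cast_ne_zero.2 k.succ_ne_zero
  rw [Nat.factorial_succ, Nat.cast_mul, mul_inv, mul_right_comm, inv_mul_cancel₀ hk, one_mul]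

theorem derivative_expOf [CharZero 𝕜] {Y : R⟦X⟧} (hY : constantCoeff Y = 0) :
    d⁄dX R (expOf 𝕜 Y) = d⁄dX R Y * expOf 𝕜 Y := by
  ext m
  have h1 := X_pow_dvd_iff.1 (X_pow_dvd_expOf_sub (𝕜 := 𝕜) hY (m + 2)) (m + 1) (by omega)
  have h2 := X_pow_dvd_iff.1 (dvd_mul_of_dvd_right (X_pow_dvd_expOf_sub (𝕜 := 𝕜) hY (m + 1))
    (d⁄dX R Y)) m m.lt_succ_self
  rw [map_sub, sub_eq_zero] at h1
  rw [mul_sub, map_sub, sub_eq_zero] at h2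
  rw [coeff_derivative, h1, ← coeff_derivative, derivative_sum_range_succ_smul_pow, h2]

end Exp

end PowerSeries

section FormalSpitzer

variable {𝕜 R : Type*} [Field 𝕜] [CharZero 𝕜] [CommRing R] [Algebra 𝕜 R]

theorem IsWeightOneRotaBaxter.expOf_eq_one_sub {P : R →ₗ[𝕜] R} (hP : IsWeightOneRotaBaxter P)
    (b : R) :
    expOf 𝕜 (-coeffwise P (logOneAddMulX 𝕜 b)) =
      1 - coeffwise P (expOf 𝕜 (-coeffwise P (logOneAddMulX 𝕜 b)) * (X * C b)) := by
  have : IsAddTorsionFree R := .of_isTorsionFree 𝕜 R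
  set q := d⁄dX R (logOneAddMulX 𝕜 b)
  set E := expOf 𝕜 (-coeffwise P (logOneAddMulX 𝕜 b))
  have hE : d⁄dX R E = -coeffwise P q * E := by
    rw [derivative_expOf (by simp [constantCoeff_logOneAddMulX]), map_neg, derivative_coeffwise]
  have hEC : E * C b = q * E + q * (E * (X * C b)) := by
    linear_combination (-E) * derivative_logOneAddMulX_mul (𝕜 := 𝕜) b
  set D := E - 1 + coeffwise P (E * (X * C b)) with hD
  have hD0 : constantCoeff D = 0 := by
    simp [D, E, constantCoeff_expOf]
  have hD' : d⁄dX R D = coeffwise P (q * D) - coeffwise P q * D := by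
    have h1 : d⁄dX R D = -coeffwise P q * E + coeffwise P (E * C b) -
        coeffwise P (coeffwise P q * (E * (X * C b))) := by
      rw [hD, map_add, map_sub, Derivation.map_one_eq_zero, derivative_coeffwise,
        Derivation.leibniz, show d⁄dX R (X * C b : R⟦X⟧) = C b by simp, hE, smul_eq_mul,
        smul_eq_mul, show E * C b + X * C b * (-coeffwise P q * E) =
          E * C b - coeffwise P q * (E * (X * C b)) by ring, map_sub]
      ring
    have h2 : coeffwise P (q * D) =
        coeffwise P (q * E) - coeffwise P q + coeffwise P (q * coeffwise P (E * (X * C b))) := by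
      rw [show q * D = q * E - q + q * coeffwise P (E * (X * C b)) by rw [hD]; ring, map_add,
        map_sub]
    rw [h1, h2, hEC, map_add]
    linear_combination isWeightOneRotaBaxter_coeffwise hP q (E * (X * C b)) + coeffwise P q * hD
  have hΦ : ∀ n f, X ^ n ∣ f → X ^ n ∣ coeffwise P (q * f) - coeffwise P q * f :=
    fun n f h => dvd_sub (X_pow_dvd_coeffwise P (dvd_mul_of_dvd_right h q))
      (dvd_mul_of_dvd_right h _)
  linear_combination eq_zero_of_derivative_eq hΦ hD0 hD'

theorem neg_one_pow_mul_spitzerTerm_succ {R G : Type*} [CommRing R] [FunLike G R R]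
    [AddMonoidHomClass G R R] (P : G) (b : R) (n : ℕ) :
    (-1) ^ (n + 1) * spitzerTerm P b (n + 1) = -P ((-1) ^ n * spitzerTerm P b n * b) := by
  rcases neg_one_pow_eq_or R n with h | h <;> simp [pow_succ, h, spitzerTerm]

theorem IsWeightOneRotaBaxter.coeff_expOf {P : R →ₗ[𝕜] R} (hP : IsWeightOneRotaBaxter P)
    (b : R) (n : ℕ) :
    coeff n (expOf 𝕜 (-coeffwise P (logOneAddMulX 𝕜 b))) = (-1) ^ n * spitzerTerm P b n := by
  induction n with
  | zero => simp [constantCoeff_expOf, spitzerTerm]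
  | succ n ih =>
    rw [neg_one_pow_mul_spitzerTerm_succ, ← ih]
    conv_lhs => rw [hP.expOf_eq_one_sub b]
    rw [map_sub, coeff_one, if_neg n.succ_ne_zero, zero_sub, coeff_coeffwise, mul_left_comm,
      coeff_succ_X_mul, coeff_mul_C]

end FormalSpitzer

theorem logS_one_add_eq_tsum_coeff {𝕜 R : Type*} [Field 𝕜] [CharZero 𝕜] [CommRing R]
    [Algebra 𝕜 R] [UniformSpace R] (b : R) :
    logS 𝕜 (1 + b) = ∑' n, coeff n (logOneAddMulX 𝕜 b) := by
  have hsupp : Function.support (fun n => coeff n (logOneAddMulX 𝕜 b)) ⊆ Set.range Nat.succ := by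
    rintro (_ | n) hn
    · simp [constantCoeff_logOneAddMulX] at hn
    · exact ⟨n, rfl⟩
  rw [← Nat.succ_injective.tsum_eq hsupp]
  simp [logS, coeff_succ_logOneAddMulX]

namespace IsCompleteFiltration

variable {𝕜 R : Type*} [Field 𝕜] [CharZero 𝕜] [CommRing R] [Algebra 𝕜 R] [UniformSpace R]
  {F : ℕ → Submodule 𝕜 R}

theorem coeff_mul_mem (hF : IsCompleteFiltration 𝕜 F) {f g : R⟦X⟧}
    (hf : ∀ n, coeff n f ∈ F n) (hg : ∀ n, coeff n g ∈ F n) (n : ℕ) : coeff n (f * g) ∈ F n := by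
  rw [coeff_mul]
  refine Submodule.sum_mem _ fun p hp => ?_
  rw [← Finset.HasAntidiagonal.mem_antidiagonal.1 hp]
  exact hF.mul_mem (hf p.1) (hg p.2)

theorem coeff_pow_mem (hF : IsCompleteFiltration 𝕜 F) {f : R⟦X⟧} (hf : ∀ n, coeff n f ∈ F n)
    (k n : ℕ) : coeff n (f ^ k) ∈ F n := by
  induction k generalizing n with
  | zero =>
    rw [pow_zero, coeff_one]
    split_ifs with h
    · exact h ▸ hF.mem_zero 1
    · exact (F n).zero_mem
  | succ k ih => rw [pow_succ]; exact hF.coeff_mul_mem ih hf n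

theorem coeff_logOneAddMulX_mem (hF : IsCompleteFiltration 𝕜 F) {b : R} (hb : b ∈ F 1) :
    ∀ n, coeff n (logOneAddMulX 𝕜 b) ∈ F n
  | 0 => by
    rw [coeff_zero_eq_constantCoeff_apply, constantCoeff_logOneAddMulX]
    exact (F 0).zero_mem
  | n + 1 => by rw [coeff_succ_logOneAddMulX]; exact (F _).smul_mem _ (hF.pow_mem hb _)

theorem mem_of_eq_neg_map_mul (hF : IsCompleteFiltration 𝕜 F) {P : R →ₗ[𝕜] R}
    (hP : ∀ n, ∀ x ∈ F n, P x ∈ F n) {b : R} (hb : b ∈ F 1) {x : ℕ → R}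
    (hx : ∀ n, x (n + 1) = -P (x n * b)) (n : ℕ) : x n ∈ F n := by
  induction n with
  | zero => exact hF.mem_zero _
  | succ n ih => rw [hx]; exact neg_mem (hP _ _ (hF.mul_mem ih hb))

theorem eq_of_eq_one_sub_map_mul [T1Space R] (hF : IsCompleteFiltration 𝕜 F) {P : R →ₗ[𝕜] R}
    (hP : ∀ n, ∀ x ∈ F n, P x ∈ F n) {b : R} (hb : b ∈ F 1) {x y : R}
    (hx : x = 1 - P (x * b)) (hy : y = 1 - P (y * b)) : x = y := by
  have hxy : ∀ n, x - y ∈ F n := hF.mem_of_eq_neg_map_mul hP hb (x := fun _ => x - y) fun _ => by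
    rw [sub_mul, map_sub]
    linear_combination hx - hy
  exact sub_eq_zero.1 (hF.eq_zero_of_forall_mem hxy)

section Tsum

variable [IsTopologicalRing R] [IsUniformAddGroup R] [CompleteSpace R] [T2Space R]

theorem tsum_eq_one_sub_map_tsum_mul (hF : IsCompleteFiltration 𝕜 F) {P : R →ₗ[𝕜] R}
    (hP : ∀ n, ∀ x ∈ F n, P x ∈ F n) {b : R} (hb : b ∈ F 1) {x : ℕ → R} (h0 : x 0 = 1)
    (hx : ∀ n, x (n + 1) = -P (x n * b)) : ∑' n, x n = 1 - P ((∑' n, x n) * b) := by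
  have hs : Summable x := hF.summable_of_mem_nat (hF.mem_of_eq_neg_map_mul hP hb hx)
  calc ∑' n, x n = x 0 + ∑' n, x (n + 1) := hs.tsum_eq_zero_add
    _ = 1 - ∑' n, P (x n * b) := by simp only [h0, hx, tsum_neg, sub_eq_add_neg]
    _ = 1 - P ((∑' n, x n) * b) := by
      rw [← hs.tsum_mul_right, (hs.mul_right b).map_tsum P (hF.continuous_of_map_mem hP)]

theorem tsum_coeff_mul (hF : IsCompleteFiltration 𝕜 F) {f g : R⟦X⟧}
    (hf : ∀ n, coeff n f ∈ F n) (hg : ∀ n, coeff n g ∈ F n) :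
    (∑' n, coeff n f) * ∑' n, coeff n g = ∑' n, coeff n (f * g) := by
  have hfg : Summable fun p : ℕ × ℕ => coeff p.1 f * coeff p.2 g :=
    hF.summable_of_mem_max fun p =>
      hF.antitone (max_le_add_of_nonneg (Nat.zero_le _) (Nat.zero_le _))
        (hF.mul_mem (hf p.1) (hg p.2))
  simp only [coeff_mul]
  exact (hF.summable_of_mem_nat hf).tsum_mul_tsum_eq_tsum_sum_antidiagonal
    (hF.summable_of_mem_nat hg) hfg

theorem tsum_coeff_pow (hF : IsCompleteFiltration 𝕜 F) {f : R⟦X⟧} (hf : ∀ n, coeff n f ∈ F n)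
    (k : ℕ) : (∑' n, coeff n f) ^ k = ∑' n, coeff n (f ^ k) := by
  induction k with
  | zero => simp [coeff_one]
  | succ k ih => rw [pow_succ, ih, hF.tsum_coeff_mul (hF.coeff_pow_mem hf k) hf, pow_succ]

theorem expS_tsum_coeff (hF : IsCompleteFiltration 𝕜 F) {Y : R⟦X⟧} (hY0 : constantCoeff Y = 0)
    (hY : ∀ n, coeff n Y ∈ F n) : expS 𝕜 (∑' n, coeff n Y) = ∑' n, coeff n (expOf 𝕜 Y) := by
  set u : ℕ → ℕ → R := fun k m => (k.factorial : 𝕜)⁻¹ • coeff m (Y ^ k)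
  have hu0 : ∀ {k m}, m < k → u k m = 0 := fun h => by simp [u, coeff_pow_of_lt hY0 h]
  have hu : Summable (Function.uncurry u) := hF.summable_of_mem_max fun ⟨k, m⟩ => by
    rcases lt_or_ge m k with h | h
    · simp [hu0 h]
    · rw [max_eq_right h]
      exact (F m).smul_mem _ (hF.coeff_pow_mem hY k m)
  calc expS 𝕜 (∑' n, coeff n Y) = ∑' k, ∑' m, u k m := tsum_congr fun k => by
        simp only [u, Algebra.smul_def, hF.tsum_coeff_pow hY k,
          (hF.summable_of_mem_nat (hF.coeff_pow_mem hY k)).tsum_mul_left]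
    _ = ∑' m, ∑' k, u k m := hu.tsum_comm.symm
    _ = ∑' m, coeff m (expOf 𝕜 Y) := tsum_congr fun m => by
        rw [tsum_eq_sum (s := Finset.range (m + 1)) fun k hk => hu0 (by simpa using hk)]
        simp [u, expOf, map_sum]

end Tsum

end IsCompleteFiltration

theorem stmt18 (F : ℕ → Submodule K A) (hF : IsCompleteFiltration K F)
    (P : A →ₗ[K] A) (hP : ∀ n, ∀ x ∈ F n, P x ∈ F n)
    (hRB : ∀ x y : A, P x * P y + P (x * y) = P (x * P y) + P (P x * y))
    (b : A) (hb : b ∈ F 1) :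
    expS K (-(P (logS K (1 + b)))) = 1 - P (expS K (-(P (logS K (1 + b)))) * b) ∧
    (∀ x' : A, x' = 1 - P (x' * b) → x' = expS K (-(P (logS K (1 + b))))) ∧
    expS K (-(P (logS K (1 + b)))) = ∑' n : ℕ, ((-1 : A) ^ n) * spitzerTerm (⇑P) b n := by
  set Y := -coeffwise P (logOneAddMulX K b)
  have hL := hF.coeff_logOneAddMulX_mem hb
  have hY : ∀ n, coeff n Y ∈ F n := fun n => by simpa [Y] using neg_mem (hP n _ (hL n))
  have hlog : -P (logS K (1 + b)) = ∑' n, coeff n Y := by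
    rw [logS_one_add_eq_tsum_coeff,
      (hF.summable_of_mem_nat hL).map_tsum P (hF.continuous_of_map_mem hP), ← tsum_neg]
    simp [Y]
  have hspitzer : expS K (-P (logS K (1 + b))) = ∑' n, (-1) ^ n * spitzerTerm P b n := by
    rw [hlog, hF.expS_tsum_coeff (by simp [Y, constantCoeff_logOneAddMulX]) hY]
    exact tsum_congr (IsWeightOneRotaBaxter.coeff_expOf hRB b)
  have hfix : expS K (-P (logS K (1 + b))) = 1 - P (expS K (-P (logS K (1 + b))) * b) := by
    rw [hspitzer]
    exact hF.tsum_eq_one_sub_map_tsum_mul hP hb (by simp [spitzerTerm])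
      (neg_one_pow_mul_spitzerTerm_succ P b)
  exact ⟨hfix, fun x hx => hF.eq_of_eq_one_sub_map_mul hP hb hx hfix, hspitzer⟩
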